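/- arXiv:2112.13397 — 5 statements merged into one kernel-verified Lean document; each statement's English description precedes it below -/
import Mathlib

section
/- Fix N ≥ 1 and β ∈ ℝ. Let G be an N×N complex matrix with G² = 1, let γ ↦ H(γ) and γ ↦ Q_α(γ) (α ∈ {1,2}) be differentiable maps from ℝ to N×N complex matrices, and let Z_α{}^β (α, β ∈ {1,2}) be fixed N×N complex matrices not depending on γ. Assume that for every γ ∈ ℝ and all α, β ∈ {1,2}: H(γ) is Hermitian; G·H(γ) = H(γ)·G; G·Q_α(γ) = −Q_α(γ)·G; Q_α(γ)·H(γ) = H(γ)·Q_α(γ); and Q_α(γ)·Q_β(γ)* + Q_β(γ)*·Q_α(γ) = 2δ_α^β·H(γ) + Z_α{}^β, where * denotes conjugate transpose. Then the function γ ↦ Tr(G·exp(−β·H(γ))) is constant in γ. -/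
open Matrix NormedSpace

section Aux

attribute [local instance] Matrix.linftyOpNormedRing Matrix.linftyOpNormedAlgebra

variable {N : ℕ}

/-- A matrix-valued function of a real variable is differentiable if all its entries are. -/
private lemma aux_entrywise {f : ℝ → Matrix (Fin N) (Fin N) ℂ}
    {f' : Matrix (Fin N) (Fin N) ℂ} {x : ℝ}
    (h : ∀ i j, HasDerivAt (fun t => f t i j) (f' i j) x) :
    HasDerivAt f f' x := by
  have key : ∀ A : Matrix (Fin N) (Fin N) ℂ,
      A = ∑ i, ∑ j, A i j • Matrix.single i j (1 : ℂ) := by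
    intro A
    conv_lhs => rw [Matrix.matrix_eq_sum_single A]
    refine Finset.sum_congr rfl fun i _ => Finset.sum_congr rfl fun j _ => ?_
    rw [Matrix.smul_single, smul_eq_mul, mul_one]
  have h1 : HasDerivAt (fun t => ∑ i, ∑ j, f t i j • Matrix.single i j (1 : ℂ))
      (∑ i, ∑ j, f' i j • Matrix.single i j (1 : ℂ)) x :=
    HasDerivAt.fun_sum fun i _ => HasDerivAt.fun_sum fun j _ => (h i j).smul_const _
  have hf : f = fun t => ∑ i, ∑ j, f t i j • Matrix.single i j (1 : ℂ) :=
    funext fun t => key (f t)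
  rw [← hf] at h1
  rw [← key f'] at h1
  exact h1

private lemma comm_mul {A B C : Matrix (Fin N) (Fin N) ℂ}
    (h1 : A * B = B * A) (h2 : A * C = C * A) : A * (B * C) = (B * C) * A := by
  rw [← mul_assoc, h1, mul_assoc, h2, ← mul_assoc]

/-- The key algebraic cancellation behind the invariance of the Witten index. -/
private lemma aux_key {G E Qm Qd Hd : Matrix (Fin N) (Fin N) ℂ}
    (hGE : G * E = E * G) (hEQ : Qm * E = E * Qm) (hEQc : Qmᴴ * E = E * Qmᴴ)
    (hGQ : G * Qm = -(Qm * G)) (hGQ' : G * Qd = -(Qd * G))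
    (hHd : (2 : ℂ) • Hd = (Qd * Qmᴴ + Qm * Qdᴴ) + (Qdᴴ * Qm + Qmᴴ * Qd)) :
    (G * (E * Hd)).trace = 0 := by
  have hQmG : Qm * G = -(G * Qm) := by rw [hGQ, neg_neg]
  have hQdG : Qd * G = -(G * Qd) := by rw [hGQ', neg_neg]
  have hA : (G * (E * (Qmᴴ * Qd))).trace = -((G * (E * (Qd * Qmᴴ))).trace) := by
    calc (G * (E * (Qmᴴ * Qd))).trace
        = ((G * (E * Qmᴴ)) * Qd).trace := by simp only [mul_assoc]
      _ = (Qd * (G * (E * Qmᴴ))).trace := Matrix.trace_mul_comm _ _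
      _ = ((Qd * G) * (E * Qmᴴ)).trace := by simp only [mul_assoc]
      _ = (-((G * Qd) * (E * Qmᴴ))).trace := by rw [hQdG, neg_mul]
      _ = -(((G * Qd) * (E * Qmᴴ)).trace) := Matrix.trace_neg _
      _ = -(((G * Qd) * (Qmᴴ * E)).trace) := by rw [← hEQc]
      _ = -(((G * (Qd * Qmᴴ)) * E).trace) := by simp only [mul_assoc]
      _ = -((E * (G * (Qd * Qmᴴ))).trace) := by rw [Matrix.trace_mul_comm]
      _ = -(((E * G) * (Qd * Qmᴴ)).trace) := by simp only [mul_assoc]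
      _ = -(((G * E) * (Qd * Qmᴴ)).trace) := by rw [hGE]
      _ = -((G * (E * (Qd * Qmᴴ))).trace) := by simp only [mul_assoc]
  have hB : (G * (E * (Qdᴴ * Qm))).trace = -((G * (E * (Qm * Qdᴴ))).trace) := by
    calc (G * (E * (Qdᴴ * Qm))).trace
        = ((G * (E * Qdᴴ)) * Qm).trace := by simp only [mul_assoc]
      _ = (Qm * (G * (E * Qdᴴ))).trace := Matrix.trace_mul_comm _ _
      _ = ((Qm * G) * (E * Qdᴴ)).trace := by simp only [mul_assoc]
      _ = (-((G * Qm) * (E * Qdᴴ))).trace := by rw [hQmG, neg_mul]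
      _ = -(((G * Qm) * (E * Qdᴴ)).trace) := Matrix.trace_neg _
      _ = -((G * ((Qm * E) * Qdᴴ)).trace) := by simp only [mul_assoc]
      _ = -((G * ((E * Qm) * Qdᴴ)).trace) := by rw [hEQ]
      _ = -((G * (E * (Qm * Qdᴴ))).trace) := by simp only [mul_assoc]
  have h2 : (G * (E * ((2 : ℂ) • Hd))).trace = (2 : ℂ) * (G * (E * Hd)).trace := by
    rw [mul_smul_comm, mul_smul_comm, Matrix.trace_smul, smul_eq_mul]
  have hz : (G * (E * ((2 : ℂ) • Hd))).trace = 0 := by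
    rw [hHd]
    simp only [mul_add, Matrix.trace_add]
    rw [hA, hB]
    ring
  have h0 : (2 : ℂ) * (G * (E * Hd)).trace = 0 := by rw [← h2, hz]
  exact (mul_eq_zero.mp h0).resolve_left two_ne_zero

end Aux

/-- **Invariance of the Witten index for weak supersymmetric systems under deformations.**
If the Hamiltonian `H γ` and the supercharges `Q α γ` depend on a deformation parameter `γ`
while the central charges `Z α β` in the relation
`{Q_α, Q̄^β} = 2 δ_α^β H + Z_α^β` do not, then the Witten index
`Tr (G * exp (-β H))` (with `G` the grading `(-1)^F`) is independent of `γ`. -/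
theorem witten_index_invariant_under_deformation
    (N : ℕ) (hN : 1 ≤ N) (β : ℝ)
    (G : Matrix (Fin N) (Fin N) ℂ) (hG : G * G = 1)
    (H : ℝ → Matrix (Fin N) (Fin N) ℂ)
    (Q : Fin 2 → ℝ → Matrix (Fin N) (Fin N) ℂ)
    (Z : Fin 2 → Fin 2 → Matrix (Fin N) (Fin N) ℂ)
    (hHdiff : ∀ i j : Fin N, Differentiable ℝ (fun γ => H γ i j))
    (hQdiff : ∀ (α : Fin 2) (i j : Fin N), Differentiable ℝ (fun γ => Q α γ i j))
    (hHherm : ∀ γ : ℝ, (H γ).IsHermitian)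
    (hGH : ∀ γ : ℝ, G * H γ = H γ * G)
    (hGQ : ∀ (γ : ℝ) (α : Fin 2), G * Q α γ = -(Q α γ * G))
    (hQH : ∀ (γ : ℝ) (α : Fin 2), Q α γ * H γ = H γ * Q α γ)
    (halg : ∀ (γ : ℝ) (α β' : Fin 2),
      Q α γ * (Q β' γ)ᴴ + (Q β' γ)ᴴ * Q α γ =
        (if α = β' then (2 : ℂ) • H γ else 0) + Z α β') :
    ∀ γ₁ γ₂ : ℝ,
      (G * NormedSpace.exp (-(β : ℂ) • H γ₁)).trace =
      (G * NormedSpace.exp (-(β : ℂ) • H γ₂)).trace := by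
  intro γ₁ γ₂
  letI : NormedRing (Matrix (Fin N) (Fin N) ℂ) := Matrix.linftyOpNormedRing
  letI : NormedAlgebra ℝ (Matrix (Fin N) (Fin N) ℂ) := Matrix.linftyOpNormedAlgebra
  letI : NormedAlgebra ℂ (Matrix (Fin N) (Fin N) ℂ) := Matrix.linftyOpNormedAlgebra
  letI : CompleteSpace (Matrix (Fin N) (Fin N) ℂ) :=
    FiniteDimensional.complete ℝ (Matrix (Fin N) (Fin N) ℂ)
  -- entrywise derivatives
  set H' : ℝ → Matrix (Fin N) (Fin N) ℂ :=
    fun γ => Matrix.of fun i j => deriv (fun t => H t i j) γ with hH'def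
  set Q' : ℝ → Matrix (Fin N) (Fin N) ℂ :=
    fun γ => Matrix.of fun i j => deriv (fun t => Q 0 t i j) γ with hQ'def
  have hH : ∀ γ, HasDerivAt H (H' γ) γ := fun γ =>
    aux_entrywise fun i j => (hHdiff i j γ).hasDerivAt
  have hQ : ∀ γ, HasDerivAt (Q 0) (Q' γ) γ := fun γ =>
    aux_entrywise fun i j => (hQdiff 0 i j γ).hasDerivAt
  have hQc : ∀ γ, HasDerivAt (fun t => (Q 0 t)ᴴ) ((Q' γ)ᴴ) γ := fun γ =>
    aux_entrywise fun i j => ((hQdiff 0 j i γ).hasDerivAt).star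
  -- the grading anticommutes with the derivative of the supercharge
  have hGQd : ∀ γ, G * Q' γ = -(Q' γ * G) := by
    intro γ
    have h1 : HasDerivAt (fun t => G * Q 0 t) (G * Q' γ) γ := (hQ γ).const_mul G
    have h2 : HasDerivAt (fun t => G * Q 0 t) (-(Q' γ * G)) γ := by
      have h3 : HasDerivAt (fun t => -(Q 0 t * G)) (-(Q' γ * G)) γ := ((hQ γ).mul_const G).neg
      have heq : (fun t => G * Q 0 t) = fun t => -(Q 0 t * G) := funext fun t => hGQ t 0
      rw [heq]; exact h3
    exact h1.unique h2
  -- derivative of the Hamiltonian from the algebra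
  have h2H : ∀ γ, (2 : ℂ) • H' γ =
      (Q' γ * (Q 0 γ)ᴴ + Q 0 γ * (Q' γ)ᴴ) + ((Q' γ)ᴴ * Q 0 γ + (Q 0 γ)ᴴ * Q' γ) := by
    intro γ
    have hL : HasDerivAt (fun t => Q 0 t * (Q 0 t)ᴴ + (Q 0 t)ᴴ * Q 0 t)
        ((Q' γ * (Q 0 γ)ᴴ + Q 0 γ * (Q' γ)ᴴ) + ((Q' γ)ᴴ * Q 0 γ + (Q 0 γ)ᴴ * Q' γ)) γ :=
      ((hQ γ).mul (hQc γ)).add ((hQc γ).mul (hQ γ))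
    have hR : HasDerivAt (fun t => Q 0 t * (Q 0 t)ᴴ + (Q 0 t)ᴴ * Q 0 t) ((2 : ℂ) • H' γ) γ := by
      have heq : (fun t => Q 0 t * (Q 0 t)ᴴ + (Q 0 t)ᴴ * Q 0 t)
          = fun t => (2 : ℂ) • H t + Z 0 0 := funext fun t => by simpa using halg t 0 0
      rw [heq]
      exact (HasDerivAt.const_smul (2 : ℂ) (hH γ)).add_const (Z 0 0)
    exact hR.unique hL
  -- the conjugate supercharge commutes with the Hamiltonian
  have hHQc : ∀ γ, (Q 0 γ)ᴴ * H γ = H γ * (Q 0 γ)ᴴ := by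
    intro γ
    have h := congrArg Matrix.conjTranspose (hQH γ 0)
    rw [Matrix.conjTranspose_mul, Matrix.conjTranspose_mul, (hHherm γ).eq] at h
    exact h.symm
  -- derivative of powers of the Hamiltonian, and vanishing of the graded trace
  have pd : ∀ (n : ℕ) (γ : ℝ), ∃ D, HasDerivAt (fun t => H t ^ n) D γ ∧
      ∀ E, G * E = E * G → Q 0 γ * E = E * Q 0 γ → (Q 0 γ)ᴴ * E = E * (Q 0 γ)ᴴ →
        (G * (E * D)).trace = 0 := by
    intro n
    induction n with
    | zero =>
        intro γ
        refine ⟨0, ?_, ?_⟩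
        · simp only [pow_zero]; exact hasDerivAt_const γ _
        · intro E _ _ _; simp
    | succ n ih =>
        intro γ
        obtain ⟨D, hD, hDtr⟩ := ih γ
        refine ⟨H' γ * H γ ^ n + H γ * D, ?_, ?_⟩
        · have h1 := (hH γ).mul hD
          have hfun : (fun t => H t ^ (n + 1)) = fun t => H t * H t ^ n :=
            funext fun t => pow_succ' _ _
          rw [hfun]; exact h1
        · intro E hEG hEQ hEQc
          have hcomm : Q 0 γ * H γ = H γ * Q 0 γ := hQH γ 0
          have cG : Commute G (H γ ^ n) := Commute.pow_right (hGH γ) n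
          have cQ : Commute (Q 0 γ) (H γ ^ n) := Commute.pow_right hcomm n
          have cQc : Commute ((Q 0 γ)ᴴ) (H γ ^ n) := Commute.pow_right (hHQc γ) n
          rw [mul_add, mul_add, Matrix.trace_add]
          have t2 : (G * (E * (H γ * D))).trace = 0 := by
            have h1 : E * (H γ * D) = (E * H γ) * D := by rw [mul_assoc]
            rw [h1]
            exact hDtr (E * H γ) (comm_mul hEG (hGH γ)) (comm_mul hEQ hcomm)
              (comm_mul hEQc (hHQc γ))
          have t1 : (G * (E * (H' γ * H γ ^ n))).trace = 0 := by
            have hre : (G * (E * (H' γ * H γ ^ n))).trace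
                = (G * ((H γ ^ n * E) * H' γ)).trace := by
              calc (G * (E * (H' γ * H γ ^ n))).trace
                  = ((G * (E * H' γ)) * H γ ^ n).trace := by simp only [mul_assoc]
                _ = (H γ ^ n * (G * (E * H' γ))).trace := Matrix.trace_mul_comm _ _
                _ = ((H γ ^ n * G) * (E * H' γ)).trace := by simp only [mul_assoc]
                _ = ((G * H γ ^ n) * (E * H' γ)).trace := by rw [← cG.eq]
                _ = (G * ((H γ ^ n * E) * H' γ)).trace := by simp only [mul_assoc]
            rw [hre]
            exact aux_key (comm_mul cG.eq hEG) (comm_mul cQ.eq hEQ)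
              (comm_mul cQc.eq hEQc) (hGQ γ 0) (hGQd γ) (h2H γ)
          rw [t1, t2, add_zero]
  -- the graded trace of each power of H is constant
  let T₀ : Matrix (Fin N) (Fin N) ℂ →ₗ[ℂ] ℂ :=
    (Matrix.traceLinearMap (Fin N) ℂ ℂ).comp (LinearMap.mulLeft ℂ G)
  let T : Matrix (Fin N) (Fin N) ℂ →L[ℂ] ℂ := LinearMap.toContinuousLinearMap T₀
  have hT : ∀ X, T X = (G * X).trace := fun X => rfl
  have gconst : ∀ (n : ℕ) (a b : ℝ), (G * H a ^ n).trace = (G * H b ^ n).trace := by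
    intro n a b
    have hdz : ∀ γ, HasDerivAt (fun t => T (H t ^ n)) 0 γ := by
      intro γ
      obtain ⟨D, hD, hDtr⟩ := pd n γ
      have h1 := ((T.restrictScalars ℝ).hasFDerivAt).comp_hasDerivAt γ hD
      have hz : (T.restrictScalars ℝ) D = 0 := by
        show T D = 0
        rw [hT]
        have := hDtr 1 (by simp) (by simp) (by simp)
        simpa using this
      replace h1 := h1.congr_deriv hz
      exact h1
    have hc : (fun t => T (H t ^ n)) a = (fun t => T (H t ^ n)) b :=
      is_const_of_deriv_eq_zero (fun γ => (hdz γ).differentiableAt)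
        (fun γ => (hdz γ).deriv) a b
    simpa [hT] using hc
  -- expand the exponential as a series
  have expand : ∀ γ : ℝ, (G * NormedSpace.exp (-(β : ℂ) • H γ)).trace
      = ∑' (n : ℕ), ((Nat.factorial n : ℂ))⁻¹ • ((-(β : ℂ)) ^ n • (G * H γ ^ n).trace) := by
    intro γ
    have hs : Summable (fun n : ℕ => ((Nat.factorial n : ℂ))⁻¹ • (-(β : ℂ) • H γ) ^ n) :=
      NormedSpace.expSeries_summable' _
    calc (G * NormedSpace.exp (-(β : ℂ) • H γ)).trace
        = T (NormedSpace.exp (-(β : ℂ) • H γ)) := (hT _).symm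
      _ = T (∑' (n : ℕ), ((Nat.factorial n : ℂ))⁻¹ • (-(β : ℂ) • H γ) ^ n) := by rw [NormedSpace.exp_eq_tsum (𝕂 := ℂ)]
      _ = ∑' (n : ℕ), T (((Nat.factorial n : ℂ))⁻¹ • (-(β : ℂ) • H γ) ^ n) := T.map_tsum hs
      _ = ∑' (n : ℕ), ((Nat.factorial n : ℂ))⁻¹ • ((-(β : ℂ)) ^ n • (G * H γ ^ n).trace) := by
          refine tsum_congr fun n => ?_
          rw [smul_pow, T.map_smul, T.map_smul, hT]
  have main : (G * NormedSpace.exp (-(β : ℂ) • H γ₁)).trace = (G * NormedSpace.exp (-(β : ℂ) • H γ₂)).trace := by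
    rw [expand γ₁, expand γ₂]
    exact tsum_congr fun n => by rw [gconst n γ₁ γ₂]
  exact main
end

section
/- Let G be an N×N complex matrix, β ∈ ℝ, and let H : ℝ → (N×N complex matrices) be differentiable with G·H(γ) = H(γ)·G for all γ ∈ ℝ. Then the function g(γ) = Tr(G·exp(−β·H(γ))) is differentiable and g'(γ) = −β·Tr(G·H'(γ)·exp(−β·H(γ))) for every γ. -/
open Matrix NormedSpace

section Aux

open Finset Filter Topology
open scoped Nat

attribute [local instance] Matrix.linftyOpNormedAddCommGroup Matrix.linftyOpNormedSpace
  Matrix.linftyOpNormedRing Matrix.linftyOpNormedAlgebra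

variable {N : ℕ}

private lemma aux_norm_entry_le (A : Matrix (Fin N) (Fin N) ℂ) (i j : Fin N) :
    ‖A i j‖ ≤ ‖A‖ := by
  have h2 : ‖A i j‖₊ ≤ ∑ j', ‖A i j'‖₊ :=
    Finset.single_le_sum (f := fun j' => ‖A i j'‖₊) (fun _ _ => zero_le) (Finset.mem_univ j)
  have h : (∑ j', ‖A i j'‖₊) ≤ ‖A‖₊ := by
    rw [Matrix.linfty_opNNNorm_def]
    exact Finset.le_sup (f := fun i => ∑ j, ‖A i j‖₊) (Finset.mem_univ i)
  exact_mod_cast h2.trans h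

private lemma aux_norm_trace_le (A : Matrix (Fin N) (Fin N) ℂ) :
    ‖A.trace‖ ≤ N * ‖A‖ := by
  calc ‖A.trace‖ ≤ ∑ i, ‖A i i‖ := norm_sum_le _ _
    _ ≤ ∑ _i : Fin N, ‖A‖ := Finset.sum_le_sum fun i _ => aux_norm_entry_le A i i
    _ = N * ‖A‖ := by simp [Finset.sum_const, nsmul_eq_mul]

private lemma aux_norm_le_sum (A : Matrix (Fin N) (Fin N) ℂ) :
    ‖A‖ ≤ ∑ i, ∑ j, ‖A i j‖ := by
  have h : ‖A‖₊ ≤ ∑ i, ∑ j, ‖A i j‖₊ := by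
    rw [Matrix.linfty_opNNNorm_def]
    refine Finset.sup_le fun i _ => ?_
    exact Finset.single_le_sum (f := fun i' => ∑ j, ‖A i' j‖₊)
      (fun _ _ => zero_le) (Finset.mem_univ i)
  have h' := (NNReal.coe_le_coe).2 h
  simpa [NNReal.coe_sum] using h'

private lemma aux_norm_one_le : ‖(1 : Matrix (Fin N) (Fin N) ℂ)‖ ≤ 1 := by
  rw [show (1 : Matrix (Fin N) (Fin N) ℂ) = Matrix.diagonal 1 from (Matrix.diagonal_one).symm,
    Matrix.linfty_opNorm_diagonal]
  refine (pi_norm_le_iff_of_nonneg zero_le_one).2 fun i => by simp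

private lemma aux_norm_pow_le (A : Matrix (Fin N) (Fin N) ℂ) {R : ℝ}
    (hA : ‖A‖ ≤ R) (hR : 1 ≤ R) : ∀ k, ‖A ^ k‖ ≤ R ^ k := by
  intro k
  induction k with
  | zero =>
      rw [pow_zero, pow_zero]
      exact aux_norm_one_le
  | succ k ih =>
      calc ‖A ^ (k + 1)‖ = ‖A ^ k * A‖ := by rw [pow_succ]
        _ ≤ ‖A ^ k‖ * ‖A‖ := norm_mul_le _ _
        _ ≤ R ^ k * R := by
            have hR0 : (0:ℝ) ≤ R := zero_le_one.trans hR
            exact mul_le_mul ih hA (norm_nonneg _) (by positivity)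
        _ = R ^ (k + 1) := (pow_succ R k).symm

private lemma aux_hasDerivAt_matrix_mul {F G : ℝ → Matrix (Fin N) (Fin N) ℂ}
    {F' G' : Matrix (Fin N) (Fin N) ℂ} {γ : ℝ}
    (hF : ∀ i j, HasDerivAt (fun t => F t i j) (F' i j) γ)
    (hG : ∀ i j, HasDerivAt (fun t => G t i j) (G' i j) γ) :
    ∀ i j, HasDerivAt (fun t => (F t * G t) i j) ((F' * G γ + F γ * G') i j) γ := by
  intro i j
  have h : HasDerivAt (fun t => ∑ k, F t i k * G t k j)
      (∑ k, (F' i k * G γ k j + F γ i k * G' k j)) γ :=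
    HasDerivAt.fun_sum fun k _ => (hF i k).mul (hG k j)
  simpa [Matrix.mul_apply, Matrix.add_apply, Finset.sum_add_distrib] using h

private lemma aux_hasDerivAt_matrix_pow {M : ℝ → Matrix (Fin N) (Fin N) ℂ}
    {M' : Matrix (Fin N) (Fin N) ℂ} {γ : ℝ}
    (hM : ∀ i j, HasDerivAt (fun t => M t i j) (M' i j) γ) :
    ∀ (n : ℕ) (i j : Fin N), HasDerivAt (fun t => (M t ^ n) i j)
      ((∑ k ∈ Finset.range n, M γ ^ k * M' * M γ ^ (n - 1 - k)) i j) γ := by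
  intro n
  induction n with
  | zero =>
      intro i j
      simpa using hasDerivAt_const γ ((1 : Matrix (Fin N) (Fin N) ℂ) i j)
  | succ n ih =>
      have key : (∑ k ∈ Finset.range n, M γ ^ k * M' * M γ ^ (n - 1 - k)) * M γ
          + M γ ^ n * M'
          = ∑ k ∈ Finset.range (n + 1), M γ ^ k * M' * M γ ^ (n + 1 - 1 - k) := by
        rw [Finset.sum_range_succ, Finset.sum_mul]
        congr 1
        · refine Finset.sum_congr rfl fun k hk => ?_
          rw [Finset.mem_range] at hk
          rw [mul_assoc, ← pow_succ]
          have he : n - 1 - k + 1 = n + 1 - 1 - k := by omega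
          rw [he]
        · simp
      intro i j
      have h := aux_hasDerivAt_matrix_mul ih hM i j
      rw [← key]
      simpa [pow_succ] using h

private lemma aux_pow_sub_pow (x y : Matrix (Fin N) (Fin N) ℂ) (n : ℕ) :
    x ^ n - y ^ n = ∑ k ∈ Finset.range n, x ^ k * (x - y) * y ^ (n - 1 - k) := by
  induction n with
  | zero => simp
  | succ n ih =>
      have step : x ^ (n + 1) - y ^ (n + 1) = x * (x ^ n - y ^ n) + (x - y) * y ^ n := by
        rw [pow_succ', pow_succ']
        generalize x ^ n = a
        generalize y ^ n = b
        noncomm_ring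
      rw [step, ih, Finset.mul_sum, Finset.sum_range_succ']
      congr 1
      · refine Finset.sum_congr rfl fun k hk => ?_
        rw [← mul_assoc, ← mul_assoc, ← pow_succ']
        have he : n - 1 - k = n + 1 - 1 - (k + 1) := by omega
        rw [he, mul_assoc]
      · simp

/-- The linear functional `Y ↦ (A * Y * B).trace`. -/
private noncomputable def traceMulLin (A B : Matrix (Fin N) (Fin N) ℂ) :
    Matrix (Fin N) (Fin N) ℂ →ₗ[ℂ] ℂ where
  toFun Y := (A * Y * B).trace
  map_add' Y Z := by simp [Matrix.mul_add, Matrix.add_mul]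
  map_smul' c Y := by simp [Matrix.mul_smul, Matrix.smul_mul]

@[simp] private lemma traceMulLin_apply (A B Y : Matrix (Fin N) (Fin N) ℂ) :
    traceMulLin A B Y = (A * Y * B).trace := rfl

private lemma aux_hasSum_traceMul (A B X : Matrix (Fin N) (Fin N) ℂ) :
    HasSum (fun n : ℕ => (n ! : ℂ)⁻¹ * (A * X ^ n * B).trace) ((A * exp X * B).trace) := by
  have h := exp_series_hasSum_exp' (𝕂 := ℂ) X
  have hc : Continuous (traceMulLin A B) :=
    (traceMulLin A B).continuous_of_finiteDimensional
  have h2 := h.map (traceMulLin A B) hc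
  simp [Function.comp_def, Matrix.mul_smul, Matrix.smul_mul, smul_eq_mul] at h2
  exact h2

private lemma aux_trace_cycle_key (G X Md : Matrix (Fin N) (Fin N) ℂ)
    (h : Commute G X) {n k : ℕ} (hk : k < n) :
    (G * (X ^ k * Md * X ^ (n - 1 - k))).trace = (G * X ^ (n - 1) * Md).trace := by
  have hpow : ∀ m : ℕ, X ^ m * G = G * X ^ m := fun m => (h.pow_right m).symm
  calc (G * (X ^ k * Md * X ^ (n - 1 - k))).trace
      = (G * X ^ k * Md * X ^ (n - 1 - k)).trace := by rw [← mul_assoc, ← mul_assoc]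
    _ = (X ^ (n - 1 - k) * (G * X ^ k * Md)).trace := (Matrix.trace_mul_comm _ _)
    _ = (G * X ^ (n - 1) * Md).trace := by
        rw [← mul_assoc, ← mul_assoc, hpow, mul_assoc G (X ^ (n - 1 - k)) (X ^ k), ← pow_add]
        have he : n - 1 - k + k = n - 1 := by omega
        rw [he]

private lemma aux_term_bound (Gm A B Qm : Matrix (Fin N) (Fin N) ℂ) {R C : ℝ}
    (hA : ‖A‖ ≤ R) (hB : ‖B‖ ≤ R) (hR : 1 ≤ R) (hQ : ‖Qm‖ ≤ C) (n : ℕ) :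
    ‖(n ! : ℂ)⁻¹ * (Gm * (∑ k ∈ Finset.range n, A ^ k * Qm * B ^ (n - 1 - k))).trace‖
      ≤ (N * ‖Gm‖ * C) * ((n : ℝ) * R ^ n / n !) := by
  have hC : 0 ≤ C := (norm_nonneg _).trans hQ
  have hR0 : (0:ℝ) ≤ R := zero_le_one.trans hR
  have hs : ‖∑ k ∈ Finset.range n, A ^ k * Qm * B ^ (n - 1 - k)‖ ≤ n * (C * R ^ n) := by
    calc ‖∑ k ∈ Finset.range n, A ^ k * Qm * B ^ (n - 1 - k)‖
        ≤ ∑ k ∈ Finset.range n, ‖A ^ k * Qm * B ^ (n - 1 - k)‖ := norm_sum_le _ _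
      _ ≤ ∑ _k ∈ Finset.range n, C * R ^ n := by
          refine Finset.sum_le_sum fun k hk => ?_
          rw [Finset.mem_range] at hk
          have hak := aux_norm_pow_le A hA hR k
          have hbk := aux_norm_pow_le B hB hR (n - 1 - k)
          have h1 : ‖A ^ k * Qm * B ^ (n - 1 - k)‖ ≤ R ^ k * C * R ^ (n - 1 - k) := by
            calc ‖A ^ k * Qm * B ^ (n - 1 - k)‖
                ≤ ‖A ^ k * Qm‖ * ‖B ^ (n - 1 - k)‖ := norm_mul_le _ _
              _ ≤ (‖A ^ k‖ * ‖Qm‖) * ‖B ^ (n - 1 - k)‖ := by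
                  gcongr
                  exact norm_mul_le _ _
              _ ≤ (R ^ k * C) * R ^ (n - 1 - k) := by gcongr
          refine h1.trans ?_
          have h2 : R ^ k * R ^ (n - 1 - k) ≤ R ^ n := by
            rw [← pow_add]
            exact pow_le_pow_right₀ hR (by omega)
          calc R ^ k * C * R ^ (n - 1 - k) = C * (R ^ k * R ^ (n - 1 - k)) := by ring
            _ ≤ C * R ^ n := by gcongr
      _ = n * (C * R ^ n) := by simp [Finset.sum_const, Finset.card_range, nsmul_eq_mul]
  have hnorm1 : ‖((n ! : ℂ))⁻¹‖ = ((n ! : ℝ))⁻¹ := by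
    rw [norm_inv]
    norm_num
  calc ‖(n ! : ℂ)⁻¹ * (Gm * (∑ k ∈ Finset.range n, A ^ k * Qm * B ^ (n - 1 - k))).trace‖
      = ((n ! : ℝ))⁻¹ * ‖(Gm * (∑ k ∈ Finset.range n, A ^ k * Qm * B ^ (n - 1 - k))).trace‖ := by
        rw [norm_mul, hnorm1]
    _ ≤ ((n ! : ℝ))⁻¹ * (N * (‖Gm‖ * (n * (C * R ^ n)))) := by
        gcongr
        refine (aux_norm_trace_le _).trans ?_
        gcongr
        exact (norm_mul_le _ _).trans (by gcongr)
    _ = (N * ‖Gm‖ * C) * ((n : ℝ) * R ^ n / n !) := by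
        rw [div_eq_mul_inv]; ring

theorem aux_main (N : ℕ) (G : Matrix (Fin N) (Fin N) ℂ) (β : ℝ)
    (H : ℝ → Matrix (Fin N) (Fin N) ℂ)
    (hHdiff : ∀ i j : Fin N, Differentiable ℝ (fun γ => H γ i j))
    (hGH : ∀ γ : ℝ, G * H γ = H γ * G) (γ : ℝ) :
    HasDerivAt (fun γ' => (G * exp (-(β : ℂ) • H γ')).trace)
      (-(β : ℂ) *
        (G * (Matrix.of fun i j => deriv (fun γ' => H γ' i j) γ) *
          exp (-(β : ℂ) • H γ)).trace) γ := by
  classical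
  set M : ℝ → Matrix (Fin N) (Fin N) ℂ := fun t => -(β : ℂ) • H t with hM
  set Hd : Matrix (Fin N) (Fin N) ℂ := Matrix.of fun i j => deriv (fun t => H t i j) γ with hHd
  set Md : Matrix (Fin N) (Fin N) ℂ := -(β : ℂ) • Hd with hMdd
  set X : Matrix (Fin N) (Fin N) ℂ := M γ with hX
  -- entrywise derivative of M
  have hMd : ∀ i j, HasDerivAt (fun t => M t i j) (Md i j) γ := by
    intro i j
    have h := ((hHdiff i j) γ).hasDerivAt.const_mul (-(β : ℂ))
    simpa [hM, hMdd, hHd, Matrix.smul_apply, smul_eq_mul] using h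
  -- commutation
  have hGM : ∀ t, Commute G (M t) := by
    intro t
    show G * M t = M t * G
    rw [hM]
    simp only [Matrix.mul_smul, Matrix.smul_mul, hGH]
  -- the coefficient functions
  set f : ℕ → ℝ → ℂ := fun n t => (n ! : ℂ)⁻¹ * (G * M t ^ n).trace with hf
  have hSum : ∀ t, HasSum (fun n => f n t) ((G * exp (M t)).trace) := by
    intro t
    simpa [hf] using aux_hasSum_traceMul G 1 (M t)
  -- derivative of each coefficient
  set d : ℕ → ℂ := fun n => (n ! : ℂ)⁻¹ * ((n : ℂ) * (G * X ^ (n - 1) * Md).trace) with hd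
  have hfd : ∀ n, HasDerivAt (f n) (d n) γ := by
    intro n
    have hP := aux_hasDerivAt_matrix_pow hMd n
    have htr : HasDerivAt (fun t => (G * M t ^ n).trace)
        ((G * (∑ k ∈ Finset.range n, X ^ k * Md * X ^ (n - 1 - k))).trace) γ := by
      have h : HasDerivAt (fun t => ∑ i, ∑ k, G i k * (M t ^ n) k i)
          (∑ i, ∑ k, G i k * (∑ k' ∈ Finset.range n, X ^ k' * Md * X ^ (n - 1 - k')) k i) γ :=
        HasDerivAt.fun_sum fun i _ => HasDerivAt.fun_sum fun k _ => (hP k i).const_mul (G i k)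
      simpa [Matrix.trace, Matrix.diag, Matrix.mul_apply] using h
    have hval : (G * (∑ k ∈ Finset.range n, X ^ k * Md * X ^ (n - 1 - k))).trace
        = (n : ℂ) * (G * X ^ (n - 1) * Md).trace := by
      rw [Finset.mul_sum, Matrix.trace_sum]
      rw [Finset.sum_congr rfl fun k hk =>
        aux_trace_cycle_key G X Md (hGM γ) (Finset.mem_range.mp hk)]
      simp [Finset.sum_const, Finset.card_range, nsmul_eq_mul]
    have h2 := htr.const_mul ((n ! : ℂ))⁻¹
    rw [hval] at h2
    exact h2
  -- sum of the derivatives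
  have hesum : HasSum (fun n => (n ! : ℂ)⁻¹ * (G * X ^ n * Md).trace)
      ((G * exp X * Md).trace) := aux_hasSum_traceMul G Md X
  have hdsucc : ∀ n : ℕ, d (n + 1) = (n ! : ℂ)⁻¹ * (G * X ^ n * Md).trace := by
    intro n
    have hne : ((n : ℂ) + 1) ≠ 0 := Nat.cast_add_one_ne_zero n
    have key : ∀ T : ℂ, (((n:ℂ)+1) * (n ! : ℂ))⁻¹ * (((n:ℂ)+1) * T) = (n ! : ℂ)⁻¹ * T := by
      intro T
      rw [mul_inv]
      calc ((n:ℂ)+1)⁻¹ * (n !:ℂ)⁻¹ * (((n:ℂ)+1) * T)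
          = (((n:ℂ)+1)⁻¹ * ((n:ℂ)+1)) * ((n !:ℂ)⁻¹ * T) := by ring
        _ = (n !:ℂ)⁻¹ * T := by rw [inv_mul_cancel₀ hne, one_mul]
    rw [hd]
    simp only [Nat.add_sub_cancel]
    rw [show (((n+1)! : ℕ) : ℂ) = ((n:ℂ)+1) * (n ! : ℂ) from by
      rw [Nat.factorial_succ]; push_cast; ring]
    rw [show ((n+1 : ℕ) : ℂ) = (n:ℂ)+1 from by push_cast; ring]
    exact key _
  have hdsum : HasSum d ((G * exp X * Md).trace) := by
    have h1 : HasSum (fun n => d (n + 1)) ((G * exp X * Md).trace) := by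
      rw [show (fun n => d (n + 1)) = fun n => (n ! : ℂ)⁻¹ * (G * X ^ n * Md).trace from
        funext hdsucc]
      exact hesum
    have h2 := (hasSum_nat_add_iff (f := d) 1).mp h1
    have hd0 : d 0 = 0 := by simp [hd]
    simpa [hd0] using h2
  -- identify the claimed derivative value
  have hcomm : G * exp X = exp X * G := (hGM γ).exp_right
  have hvalue : (G * exp X * Md).trace
      = -(β : ℂ) * (G * Hd * exp X).trace := by
    have hswap : (G * Hd * exp X).trace = (G * exp X * Hd).trace := by
      rw [Matrix.trace_mul_cycle, ← hcomm]
    rw [hswap, hMdd, Matrix.mul_smul, Matrix.trace_smul]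
    simp
  -- set up bounds for dominated convergence
  rw [hasDerivAt_iff_tendsto_slope]
  set R : ℝ := ‖X‖ + 1 with hR
  set C : ℝ := ‖Md‖ + 1 with hC
  set Q : ℝ → Matrix (Fin N) (Fin N) ℂ := fun t => (t - γ)⁻¹ • (M t - X) with hQ
  have hRge : 1 ≤ R := by rw [hR]; linarith [norm_nonneg X]
  have hMnear : ∀ᶠ t in 𝓝 γ, ‖M t‖ ≤ R := by
    have h0 : ∀ i j : Fin N, Tendsto (fun t => ‖M t i j - X i j‖) (𝓝 γ) (𝓝 0) := by
      intro i j
      have hc : ContinuousAt (fun t => M t i j) γ := (hMd i j).continuousAt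
      have h2 : Tendsto (fun t => ‖M t i j - X i j‖) (𝓝 γ) (𝓝 ‖X i j - X i j‖) :=
        (hc.sub continuousAt_const).norm
      simpa using h2
    have hcont : Tendsto (fun t => ∑ i, ∑ j, ‖M t i j - X i j‖) (𝓝 γ) (𝓝 0) := by
      have h := tendsto_finset_sum (Finset.univ : Finset (Fin N))
        (fun i _ => tendsto_finset_sum (Finset.univ : Finset (Fin N)) (fun j _ => h0 i j))
      simpa using h
    filter_upwards [hcont.eventually_lt_const one_pos] with t ht
    have h1 : ‖M t - X‖ ≤ ∑ i, ∑ j, ‖M t i j - X i j‖ := by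
      simpa [Matrix.sub_apply] using aux_norm_le_sum (M t - X)
    have h2 : ‖M t‖ ≤ ‖M t - X‖ + ‖X‖ := by
      calc ‖M t‖ = ‖(M t - X) + X‖ := by rw [sub_add_cancel]
        _ ≤ ‖M t - X‖ + ‖X‖ := norm_add_le _ _
    rw [hR]; linarith
  have hQnear : ∀ᶠ t in 𝓝[≠] γ, ‖Q t‖ ≤ C := by
    have h0 : ∀ i j : Fin N, Tendsto (fun t => ‖Q t i j - Md i j‖) (𝓝[≠] γ) (𝓝  0) := by
      intro i j
      have hs := hasDerivAt_iff_tendsto_slope.mp (hMd i j)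
      have hs' : Tendsto (fun t => Q t i j) (𝓝[≠] γ) (𝓝 (Md i j)) := by
        refine hs.congr fun t => ?_
        simp [hQ, slope, vsub_eq_sub, hX, Matrix.smul_apply, Matrix.sub_apply]
      have h2 : Tendsto (fun t => ‖Q t i j - Md i j‖) (𝓝[≠] γ) (𝓝 ‖Md i j - Md i j‖) :=
        (hs'.sub (tendsto_const_nhds (x := Md i j))).norm
      simpa using h2
    have hcont : Tendsto (fun t => ∑ i, ∑ j, ‖Q t i j - Md i j‖) (𝓝[≠] γ) (𝓝 0) := by
      have h := tendsto_finset_sum (Finset.univ : Finset (Fin N))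
        (fun i _ => tendsto_finset_sum (Finset.univ : Finset (Fin N)) (fun j _ => h0 i j))
      simpa using h
    filter_upwards [hcont.eventually_lt_const one_pos] with t ht
    have h1 : ‖Q t - Md‖ ≤ ∑ i, ∑ j, ‖Q t i j - Md i j‖ := by
      simpa [Matrix.sub_apply] using aux_norm_le_sum (Q t - Md)
    have h2 : ‖Q t‖ ≤ ‖Q t - Md‖ + ‖Md‖ := by
      calc ‖Q t‖ = ‖(Q t - Md) + Md‖ := by rw [sub_add_cancel]
        _ ≤ ‖Q t - Md‖ + ‖Md‖ := norm_add_le _ _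
    rw [hC]; linarith
  -- slope of each coefficient in telescoped form
  have hterm : ∀ (t : ℝ) (n : ℕ), (t - γ)⁻¹ • (f n t - f n γ)
      = (n ! : ℂ)⁻¹ * (G * (∑ k ∈ Finset.range n, M t ^ k * Q t * X ^ (n - 1 - k))).trace := by
    intro t n
    have e1 : M t ^ n - X ^ n
        = ∑ k ∈ Finset.range n, M t ^ k * (M t - X) * X ^ (n - 1 - k) :=
      aux_pow_sub_pow _ _ n
    have e2 : (t - γ)⁻¹ • (M t ^ n - X ^ n)
        = ∑ k ∈ Finset.range n, M t ^ k * Q t * X ^ (n - 1 - k) := by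
      rw [e1, Finset.smul_sum]
      refine Finset.sum_congr rfl fun k _ => ?_
      simp only [hQ]
      rw [mul_smul_comm, smul_mul_assoc]
    calc (t - γ)⁻¹ • (f n t - f n γ)
        = (t - γ)⁻¹ • ((n ! : ℂ)⁻¹ * (G * (M t ^ n - X ^ n)).trace) := by
          simp only [hf]
          rw [← mul_sub, ← Matrix.trace_sub, ← Matrix.mul_sub]
      _ = (n ! : ℂ)⁻¹ * (G * ((t - γ)⁻¹ • (M t ^ n - X ^ n))).trace := by
          rw [← mul_smul_comm, ← Matrix.trace_smul, ← Matrix.mul_smul]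
      _ = _ := by rw [e2]
  -- summable bound
  set K : ℝ := N * ‖G‖ * C with hK
  set u : ℕ → ℝ := fun n => K * ((n : ℝ) * R ^ n / n !) with hu
  have husum : Summable u := by
    apply Summable.mul_left
    refine Summable.of_nonneg_of_le (fun n => by positivity) (fun n => ?_)
      (Real.summable_pow_div_factorial (2 * R))
    have hR0 : (0:ℝ) ≤ R := zero_le_one.trans hRge
    have h1 : (n : ℝ) ≤ 2 ^ n := by exact_mod_cast (Nat.lt_two_pow_self (n := n)).le
    calc (n : ℝ) * R ^ n / n ! ≤ 2 ^ n * R ^ n / n ! := by gcongr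
      _ = (2 * R) ^ n / n ! := by rw [mul_pow]
  -- dominated convergence of the slopes
  have hmain : Tendsto (fun t => ∑' n, (t - γ)⁻¹ • (f n t - f n γ)) (𝓝[≠] γ)
      (𝓝 (∑' n, d n)) := by
    refine tendsto_tsum_of_dominated_convergence husum (fun n => ?_) ?_
    · have hs := hasDerivAt_iff_tendsto_slope.mp (hfd n)
      refine hs.congr fun t => ?_
      simp [slope, vsub_eq_sub]
    · filter_upwards [hMnear.filter_mono nhdsWithin_le_nhds, hQnear] with t ht1 ht2
      intro n
      rw [hterm t n]
      have hXR : ‖X‖ ≤ R := by rw [hR]; linarith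
      simpa [hK, hu] using aux_term_bound G (M t) X (Q t) ht1 hXR hRge ht2 n
  have hfinal : Tendsto (slope (fun t => (G * exp (M t)).trace) γ) (𝓝[≠] γ)
      (𝓝 (∑' n, d n)) := by
    refine hmain.congr fun t => ?_
    have hsub : HasSum (fun n => f n t - f n γ)
        ((G * exp (M t)).trace - (G * exp X).trace) := (hSum t).sub (hSum γ)
    have hsm := hsub.const_smul ((t - γ)⁻¹)
    rw [hsm.tsum_eq]
    simp [slope, vsub_eq_sub, hX]
  rw [hdsum.tsum_eq, hvalue] at hfinal
  exact hfinal
end Aux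

/-- **Equation (4) of the paper:** the `γ`-derivative of the supertrace
`⟨⟨e^{−βH}⟩⟩ = Tr(G exp(−β H(γ)))` equals `−β Tr(G H'(γ) exp(−β H(γ)))`,
where `G` commutes with `H(γ)`. -/
theorem deriv_supertrace_exp
    (N : ℕ) (G : Matrix (Fin N) (Fin N) ℂ) (β : ℝ)
    (H : ℝ → Matrix (Fin N) (Fin N) ℂ)
    (hHdiff : ∀ i j : Fin N, Differentiable ℝ (fun γ => H γ i j))
    (hGH : ∀ γ : ℝ, G * H γ = H γ * G) :
    ∀ γ : ℝ,
      HasDerivAt (fun γ' => (G * exp (-(β : ℂ) • H γ')).trace)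
        (-(β : ℂ) *
          (G * (Matrix.of fun i j => deriv (fun γ' => H γ' i j) γ) *
            exp (-(β : ℂ) • H γ)).trace) γ := by
  intro γ
  exact aux_main N G β H hHdiff hGH γ
end

section
/- In a unital associative ℂ-algebra as below, let additionally x and p be elements commuting with all of ψ₁, ψ₂, ψ̄¹, ψ̄² and satisfying p·x − x·p = −i. Define Q_α = (p − i·x)·(ψ_α − ψ̄_α)/√2, Q̄^α = (p + i·x)·(ψ^α + ψ̄^α)/√2 and H = (p² + x²)/2 + Y. Then for all α, β ∈ {1,2}: Q_α Q_β + Q_β Q_α = 0, Q̄^α Q̄^β + Q̄^β Q̄^α = 0, Q_α Q̄^β + Q̄^β Q_α = (2H − Y)·δ_α^β + Z_α{}^β, and Q_α H = H Q_α. -/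
noncomputable section

/-- `ε^{αβ}` with `ε^{12} = -ε^{21} = 1` (indices `0,1` standing for `1,2`). -/
def εup : Fin 2 → Fin 2 → ℂ := fun α β =>
  if α = 0 ∧ β = 1 then 1 else if α = 1 ∧ β = 0 then -1 else 0

/-- `ε_{αβ}` with `ε_{12} = -ε_{21} = -1`. -/
def εdown : Fin 2 → Fin 2 → ℂ := fun α β =>
  if α = 0 ∧ β = 1 then -1 else if α = 1 ∧ β = 0 then 1 else 0

variable {A : Type*} [Ring A] [Algebra ℂ A]

/-- `ψ^α = Σ_β ε^{αβ} ψ_β`. -/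
def psiUp (ψ : Fin 2 → A) (α : Fin 2) : A := ∑ β, εup α β • ψ β

/-- `ψ̄_α = Σ_β ε_{αβ} ψ̄^β`. -/
def psibarDown (ψbar : Fin 2 → A) (α : Fin 2) : A := ∑ β, εdown α β • ψbar β

/-- The central charge `Z_α{}^β = ψ_α ψ̄^β + ψ^β ψ̄_α`. -/
def Zch (ψ ψbar : Fin 2 → A) (α β : Fin 2) : A :=
  ψ α * ψbar β + psiUp ψ β * psibarDown ψbar α

/-- The central charge `Y = ½ Σ_α (ψ̄^α ψ̄_α + ψ_α ψ^α)`. -/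
def Ych (ψ ψbar : Fin 2 → A) : A :=
  (2 : ℂ)⁻¹ • ∑ α, (ψbar α * psibarDown ψbar α + ψ α * psiUp ψ α)

set_option maxHeartbeats 2000000 in
/-- **Weak supersymmetric harmonic oscillator (Sect. 3 of the paper):** the supercharges
`Q_α = (p − ix)(ψ_α − ψ̄_α)/√2`, `Q̄^α = (p + ix)(ψ^α + ψ̄^α)/√2` and the Hamiltonian
`H = (p² + x²)/2 + Y` satisfy the su(2|1) weak supersymmetry algebra with central
charges `Y` and `Z_α{}^β`. -/
theorem weak_susy_oscillator_algebra
    {A : Type*} [Ring A] [Algebra ℂ A]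
    (ψ ψbar : Fin 2 → A)
    (hψψ : ∀ α β : Fin 2, ψ α * ψ β + ψ β * ψ α = 0)
    (hψbψb : ∀ α β : Fin 2, ψbar α * ψbar β + ψbar β * ψbar α = 0)
    (hψψb : ∀ α β : Fin 2,
      ψ α * ψbar β + ψbar β * ψ α = if α = β then (1 : A) else 0)
    (x p : A)
    (hxψ : ∀ α, x * ψ α = ψ α * x) (hxψb : ∀ α, x * ψbar α = ψbar α * x)
    (hpψ : ∀ α, p * ψ α = ψ α * p) (hpψb : ∀ α, p * ψbar α = ψbar α * p)
    (hpx : p * x - x * p = (-Complex.I) • (1 : A))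
    (Q Qbar : Fin 2 → A) (H : A)
    (hQ : ∀ α, Q α =
      ((Real.sqrt 2 : ℂ))⁻¹ • ((p - Complex.I • x) * (ψ α - psibarDown ψbar α)))
    (hQbar : ∀ α, Qbar α =
      ((Real.sqrt 2 : ℂ))⁻¹ • ((p + Complex.I • x) * (psiUp ψ α + ψbar α)))
    (hH : H = (2 : ℂ)⁻¹ • (p * p + x * x) + Ych ψ ψbar) :
    ∀ α β : Fin 2,
      Q α * Q β + Q β * Q α = 0 ∧
      Qbar α * Qbar β + Qbar β * Qbar α = 0 ∧
      Q α * Qbar β + Qbar β * Q α =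
        (if α = β then (2 : ℂ) • H - Ych ψ ψbar else 0) + Zch ψ ψbar α β ∧
      Q α * H = H * Q α := by
  -- scalar fact
  have hs2 : ((Real.sqrt 2 : ℂ))⁻¹ * ((Real.sqrt 2 : ℂ))⁻¹ = (2:ℂ)⁻¹ := by
    rw [← mul_inv]
    norm_num [← Complex.ofReal_mul, Real.mul_self_sqrt]
  have s2sq : (((Real.sqrt 2 : ℝ) : ℂ))⁻¹ ^ 2 = (2:ℂ)⁻¹ := by
    rw [sq]; exact hs2
  -- halving
  have halve : ∀ a : A, a + a = 0 → a = 0 := by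
    intro a h
    have h2 : (2:ℂ) • a = 0 := by rw [two_smul]; exact h
    have := congrArg (fun z => (2:ℂ)⁻¹ • z) h2
    simpa [smul_smul] using this
  -- squares vanish
  have sqψ : ∀ γ, ψ γ * ψ γ = 0 := fun γ => halve _ (hψψ γ γ)
  have sqψb : ∀ γ, ψbar γ * ψbar γ = 0 := fun γ => halve _ (hψbψb γ γ)
  have sqψ' : ∀ γ (t : A), ψ γ * (ψ γ * t) = 0 := by
    intro γ t; rw [← mul_assoc, sqψ, zero_mul]
  have sqψb' : ∀ γ (t : A), ψbar γ * (ψbar γ * t) = 0 := by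
    intro γ t; rw [← mul_assoc, sqψb, zero_mul]
  -- swaps
  have swψ : ψ 1 * ψ 0 = -(ψ 0 * ψ 1) := eq_neg_of_add_eq_zero_left (hψψ 1 0)
  have swψb : ψbar 1 * ψbar 0 = -(ψbar 0 * ψbar 1) :=
    eq_neg_of_add_eq_zero_left (hψbψb 1 0)
  have swψ' : ∀ t : A, ψ 1 * (ψ 0 * t) = -(ψ 0 * (ψ 1 * t)) := by
    intro t; rw [← mul_assoc, swψ, neg_mul, mul_assoc]
  have swψb' : ∀ t : A, ψbar 1 * (ψbar 0 * t) = -(ψbar 0 * (ψbar 1 * t)) := by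
    intro t; rw [← mul_assoc, swψb, neg_mul, mul_assoc]
  have cr : ∀ γ δ, ψbar δ * ψ γ = (if γ = δ then (1:A) else 0) - ψ γ * ψbar δ :=
    fun γ δ => eq_sub_of_add_eq' (hψψb γ δ)
  have cr' : ∀ γ δ (t : A),
      ψbar δ * (ψ γ * t) = (if γ = δ then t else 0) - ψ γ * (ψbar δ * t) := by
    intro γ δ t
    rw [← mul_assoc, cr, sub_mul, ite_mul, one_mul, zero_mul, mul_assoc]
  -- boson-fermion commutation, oriented
  have xψ : ∀ γ, ψ γ * x = x * ψ γ := fun γ => (hxψ γ).symm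
  have xψb : ∀ γ, ψbar γ * x = x * ψbar γ := fun γ => (hxψb γ).symm
  have pψ : ∀ γ, ψ γ * p = p * ψ γ := fun γ => (hpψ γ).symm
  have pψb : ∀ γ, ψbar γ * p = p * ψbar γ := fun γ => (hpψb γ).symm
  have xψ' : ∀ γ (t : A), ψ γ * (x * t) = x * (ψ γ * t) := by
    intro γ t; rw [← mul_assoc, xψ, mul_assoc]
  have xψb' : ∀ γ (t : A), ψbar γ * (x * t) = x * (ψbar γ * t) := by
    intro γ t; rw [← mul_assoc, xψb, mul_assoc]
  have pψ' : ∀ γ (t : A), ψ γ * (p * t) = p * (ψ γ * t) := by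
    intro γ t; rw [← mul_assoc, pψ, mul_assoc]
  have pψb' : ∀ γ (t : A), ψbar γ * (p * t) = p * (ψbar γ * t) := by
    intro γ t; rw [← mul_assoc, pψb, mul_assoc]
  -- p x reordering
  have pxr : p * x = x * p - Complex.I • (1:A) := by
    have := hpx
    rw [sub_eq_iff_eq_add] at this
    rw [this, neg_smul]; abel
  have pxr' : ∀ t : A, p * (x * t) = x * (p * t) - Complex.I • t := by
    intro t
    rw [← mul_assoc, pxr, sub_mul, mul_assoc, smul_mul_assoc, one_mul]
  intro α β
  refine ⟨?_, ?_, ?_, ?_⟩ <;>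
  · simp only [hQ, hQbar, hH, Zch, Ych, psiUp, psibarDown, Fin.sum_univ_two]
    fin_cases α <;> fin_cases β <;>
    · simp only [εup, εdown, Fin.isValue, Fin.zero_eta, Fin.mk_one, show ((0:Fin 2) = 1) = False by simp,
        show ((1:Fin 2) = 0) = False by simp, show ((0:Fin 2) = 0) = True by simp,
        show ((1:Fin 2) = 1) = True by simp, if_true, if_false, and_true, and_false,
        true_and, false_and, reduceIte]
      simp only [one_smul, neg_smul, zero_smul, smul_zero, smul_add, smul_sub, smul_smul,
        smul_neg, add_zero, zero_add, sub_zero, zero_sub, neg_neg, mul_add, add_mul,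
        mul_sub, sub_mul, mul_neg, neg_mul, mul_assoc, smul_mul_assoc, mul_smul_comm,
        mul_one, one_mul, Complex.I_mul_I, sqψ, sqψb, sqψ', sqψb', swψ, swψb, swψ', swψb',
        cr, cr', xψ, xψb, pψ, pψb, xψ', xψb', pψ', pψb', pxr, pxr', hs2, mul_zero, zero_mul,
        show ((0:Fin 2) = 1) = False by simp, show ((1:Fin 2) = 0) = False by simp,
        show ((0:Fin 2) = 0) = True by simp, show ((1:Fin 2) = 1) = True by simp,
        if_true, if_false, reduceIte]
      match_scalars
      all_goals try ring
      all_goals try rw [Complex.I_sq]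
      all_goals try rw [s2sq]
      all_goals first | ring | norm_num
end
end

section
/- In a unital associative ℂ-algebra as below, let additionally x and p be elements commuting with all of ψ₁, ψ₂, ψ̄¹, ψ̄² and satisfying p·x − x·p = −i, and set Q_α = (p − i·x)·(ψ_α − ψ̄_α)/√2, Q̄^α = (p + i·x)·(ψ^α + ψ̄^α)/√2. Then for all α, β, γ ∈ {1,2}: Q_α Z_β{}^γ − Z_β{}^γ Q_α = ε_{αβ} Q^γ − δ_α^γ Q_β, Q̄^α Z_β{}^γ − Z_β{}^γ Q̄^α = δ_β^α Q̄^γ − ε^{αγ} Q̄_β, Q_α Y − Y Q_α = −Q_α, and Q̄^α Y − Y Q̄^α = Q̄^α, where Q^γ := Σ_δ ε^{γδ} Q_δ and Q̄_β := Σ_δ ε_{βδ} Q̄^δ. -/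
noncomputable section

variable {A : Type*} [Ring A] [Algebra ℂ A]

set_option maxHeartbeats 3200000 in
/-- **Commutators of the supercharges with the central charges (algebra (3.5)):**
`[Q_α, Z_β{}^γ] = ε_{αβ} Q^γ − δ_α^γ Q_β`,
`[Q̄^α, Z_β{}^γ] = δ_β^α Q̄^γ − ε^{αγ} Q̄_β`,
`[Q_α, Y] = −Q_α` and `[Q̄^α, Y] = Q̄^α`. -/
theorem supercharges_transform_under_Z_and_Y
    {A : Type*} [Ring A] [Algebra ℂ A]
    (ψ ψbar : Fin 2 → A)
    (hψψ : ∀ α β : Fin 2, ψ α * ψ β + ψ β * ψ α = 0)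
    (hψbψb : ∀ α β : Fin 2, ψbar α * ψbar β + ψbar β * ψbar α = 0)
    (hψψb : ∀ α β : Fin 2,
      ψ α * ψbar β + ψbar β * ψ α = if α = β then (1 : A) else 0)
    (x p : A)
    (hxψ : ∀ α, x * ψ α = ψ α * x) (hxψb : ∀ α, x * ψbar α = ψbar α * x)
    (hpψ : ∀ α, p * ψ α = ψ α * p) (hpψb : ∀ α, p * ψbar α = ψbar α * p)
    (hpx : p * x - x * p = (-Complex.I) • (1 : A))
    (Q Qbar : Fin 2 → A)
    (hQ : ∀ α, Q α =
      ((Real.sqrt 2 : ℂ))⁻¹ • ((p - Complex.I • x) * (ψ α - psibarDown ψbar α)))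
    (hQbar : ∀ α, Qbar α =
      ((Real.sqrt 2 : ℂ))⁻¹ • ((p + Complex.I • x) * (psiUp ψ α + ψbar α))) :
    ∀ α β γ : Fin 2,
      Q α * Zch ψ ψbar β γ - Zch ψ ψbar β γ * Q α =
        εdown α β • (∑ δ, εup γ δ • Q δ) - (if α = γ then Q β else 0) ∧
      Qbar α * Zch ψ ψbar β γ - Zch ψ ψbar β γ * Qbar α =
        (if β = α then Qbar γ else 0) - εup α γ • (∑ δ, εdown β δ • Qbar δ) ∧
      Q α * Ych ψ ψbar - Ych ψ ψbar * Q α = -Q α ∧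
      Qbar α * Ych ψ ψbar - Ych ψ ψbar * Qbar α = Qbar α := by
  have sq : ∀ α, ψ α * ψ α = 0 := by
    intro α
    have h2 : (2:ℂ) • (ψ α * ψ α) = 0 := by rw [two_smul]; exact hψψ α α
    have h3 := congrArg (fun z => (2:ℂ)⁻¹ • z) h2
    simpa [smul_smul] using h3
  have sqb : ∀ α, ψbar α * ψbar α = 0 := by
    intro α
    have h2 : (2:ℂ) • (ψbar α * ψbar α) = 0 := by rw [two_smul]; exact hψbψb α α
    have h3 := congrArg (fun z => (2:ℂ)⁻¹ • z) h2
    simpa [smul_smul] using h3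
  have sq' : ∀ α z, ψ α * (ψ α * z) = 0 := fun α z => by
    rw [← mul_assoc, sq, zero_mul]
  have sqb' : ∀ α z, ψbar α * (ψbar α * z) = 0 := fun α z => by
    rw [← mul_assoc, sqb, zero_mul]
  have ba : ψ 1 * ψ 0 = -(ψ 0 * ψ 1) := eq_neg_of_add_eq_zero_right (hψψ 0 1)
  have dc : ψbar 1 * ψbar 0 = -(ψbar 0 * ψbar 1) := eq_neg_of_add_eq_zero_right (hψbψb 0 1)
  have ca : ψbar 0 * ψ 0 = 1 - ψ 0 * ψbar 0 := by
    have := eq_sub_of_add_eq' (hψψb 0 0); simpa using this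
  have db : ψbar 1 * ψ 1 = 1 - ψ 1 * ψbar 1 := by
    have := eq_sub_of_add_eq' (hψψb 1 1); simpa using this
  have cb : ψbar 0 * ψ 1 = -(ψ 1 * ψbar 0) := by
    have := eq_sub_of_add_eq' (hψψb 1 0); simpa [sub_eq_add_neg] using this
  have da : ψbar 1 * ψ 0 = -(ψ 0 * ψbar 1) := by
    have := eq_sub_of_add_eq' (hψψb 0 1); simpa [sub_eq_add_neg] using this
  have ba' : ∀ z, ψ 1 * (ψ 0 * z) = -(ψ 0 * (ψ 1 * z)) := fun z => by
    rw [← mul_assoc, ba, neg_mul, mul_assoc]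
  have dc' : ∀ z, ψbar 1 * (ψbar 0 * z) = -(ψbar 0 * (ψbar 1 * z)) := fun z => by
    rw [← mul_assoc, dc, neg_mul, mul_assoc]
  have ca' : ∀ z, ψbar 0 * (ψ 0 * z) = z - ψ 0 * (ψbar 0 * z) := fun z => by
    rw [← mul_assoc, ca, sub_mul, one_mul, mul_assoc]
  have db' : ∀ z, ψbar 1 * (ψ 1 * z) = z - ψ 1 * (ψbar 1 * z) := fun z => by
    rw [← mul_assoc, db, sub_mul, one_mul, mul_assoc]
  have cb' : ∀ z, ψbar 0 * (ψ 1 * z) = -(ψ 1 * (ψbar 0 * z)) := fun z => by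
    rw [← mul_assoc, cb, neg_mul, mul_assoc]
  have da' : ∀ z, ψbar 1 * (ψ 0 * z) = -(ψ 0 * (ψbar 1 * z)) := fun z => by
    rw [← mul_assoc, da, neg_mul, mul_assoc]
  have pm : ∀ α, ψ α * p = p * ψ α := fun α => (hpψ α).symm
  have pmb : ∀ α, ψbar α * p = p * ψbar α := fun α => (hpψb α).symm
  have xm : ∀ α, ψ α * x = x * ψ α := fun α => (hxψ α).symm
  have xmb : ∀ α, ψbar α * x = x * ψbar α := fun α => (hxψb α).symm
  have pm' : ∀ α z, ψ α * (p * z) = p * (ψ α * z) := fun α z => by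
    rw [← mul_assoc, pm, mul_assoc]
  have pmb' : ∀ α z, ψbar α * (p * z) = p * (ψbar α * z) := fun α z => by
    rw [← mul_assoc, pmb, mul_assoc]
  have xm' : ∀ α z, ψ α * (x * z) = x * (ψ α * z) := fun α z => by
    rw [← mul_assoc, xm, mul_assoc]
  have xmb' : ∀ α z, ψbar α * (x * z) = x * (ψbar α * z) := fun α z => by
    rw [← mul_assoc, xmb, mul_assoc]
  intro α β γ
  refine ⟨?_, ?_, ?_, ?_⟩ <;>
  · fin_cases α <;> fin_cases β <;> fin_cases γ <;>
    · simp only [hQ, hQbar, Zch, Ych, psiUp, psibarDown, εup, εdown, Fin.sum_univ_two]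
      norm_num
      simp only [mul_add, add_mul, mul_sub, sub_mul, smul_mul_assoc, mul_smul_comm,
        smul_add, smul_sub, smul_smul, mul_assoc, one_mul, mul_one, zero_mul, mul_zero,
        neg_mul, mul_neg, smul_neg, neg_neg, one_smul, neg_smul,
        sq', sqb', sq, sqb, ba, dc, ca, db, cb, da, ba', dc', ca', db', cb', da',
        pm, pmb, xm, xmb, pm', pmb', xm', xmb']
      module
end
end

section
/- In a unital associative ℂ-algebra as below, let additionally φ, φ̄, π, π̄ be elements commuting with all of ψ₁, ψ₂, ψ̄¹, ψ̄² and satisfying π·φ − φ·π = −i, π̄·φ̄ − φ̄·π̄ = −i, while each of the pairs (π, φ̄), (π̄, φ), (π, π̄), (φ, φ̄) commutes. Define Q_α = √2·ψ_α·(π − i φ̄), Q̄^α = √2·ψ̄^α·(π̄ + i φ), H = π̄ π + φ̄ φ + (1/2) Σ_α (ψ_α ψ̄^α − ψ̄^α ψ_α), and L = i(φ π − φ̄ π̄). Then for all α, β ∈ {1,2}: Q_α Q_β + Q_β Q_α = 0, Q_α Q̄^β + Q̄^β Q_α = 2(H + L)·δ_α^β + 2·Z_α{}^β, Q_α H = H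 Q_α, Q_α L − L Q_α = Q_α, and Q̄^α L − L Q̄^α = −Q̄^α. -/
noncomputable section

variable {A : Type*} [Ring A] [Algebra ℂ A]

/-- **The complex weak supersymmetric model (Sect. 4 of the paper, ρ = 1):**
the supercharges `Q_α = √2 ψ_α (π − iφ̄)`, `Q̄^α = √2 ψ̄^α (π̄ + iφ)`,
the Hamiltonian `H = π̄π + φ̄φ + ½ Σ_α (ψ_α ψ̄^α − ψ̄^α ψ_α)` and the angular
momentum `L = i(φπ − φ̄π̄)` satisfy the su(2|1) algebra (4.4)–(4.6). -/
theorem complex_model_weak_susy_algebra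
    {A : Type*} [Ring A] [Algebra ℂ A]
    (ψ ψbar : Fin 2 → A)
    (hψψ : ∀ α β : Fin 2, ψ α * ψ β + ψ β * ψ α = 0)
    (hψbψb : ∀ α β : Fin 2, ψbar α * ψbar β + ψbar β * ψbar α = 0)
    (hψψb : ∀ α β : Fin 2,
      ψ α * ψbar β + ψbar β * ψ α = if α = β then (1 : A) else 0)
    (φ φbar π πbar : A)
    (hφψ : ∀ α, φ * ψ α = ψ α * φ) (hφψb : ∀ α, φ * ψbar α = ψbar α * φ)
    (hφbψ : ∀ α, φbar * ψ α = ψ α * φbar) (hφbψb : ∀ α, φbar * ψbar α = ψbar α * φbar)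
    (hπψ : ∀ α, π * ψ α = ψ α * π) (hπψb : ∀ α, π * ψbar α = ψbar α * π)
    (hπbψ : ∀ α, πbar * ψ α = ψ α * πbar) (hπbψb : ∀ α, πbar * ψbar α = ψbar α * πbar)
    (hπφ : π * φ - φ * π = (-Complex.I) • (1 : A))
    (hπbφb : πbar * φbar - φbar * πbar = (-Complex.I) • (1 : A))
    (hπφb : π * φbar = φbar * π) (hπbφ : πbar * φ = φ * πbar)
    (hππb : π * πbar = πbar * π) (hφφb : φ * φbar = φbar * φ)
    (Q Qbar : Fin 2 → A) (H L : A)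
    (hQ : ∀ α, Q α = (Real.sqrt 2 : ℂ) • (ψ α * (π - Complex.I • φbar)))
    (hQbar : ∀ α, Qbar α = (Real.sqrt 2 : ℂ) • (ψbar α * (πbar + Complex.I • φ)))
    (hH : H = πbar * π + φbar * φ +
      (2 : ℂ)⁻¹ • ∑ α, (ψ α * ψbar α - ψbar α * ψ α))
    (hL : L = Complex.I • (φ * π - φbar * πbar)) :
    ∀ α β : Fin 2,
      Q α * Q β + Q β * Q α = 0 ∧
      Q α * Qbar β + Qbar β * Q α =
        (if α = β then (2 : ℂ) • (H + L) else 0) + (2 : ℂ) • Zch ψ ψbar α β ∧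
      Q α * H = H * Q α ∧
      Q α * L - L * Q α = Q α ∧
      Qbar α * L - L * Qbar α = -Qbar α := by
  have h2 : (Real.sqrt 2 : ℂ) * (Real.sqrt 2 : ℂ) = 2 := by
    rw [← Complex.ofReal_mul, Real.mul_self_sqrt (by norm_num : (0:ℝ) ≤ 2)]
    norm_num
  -- generic rearrangement lemmas
  have rearr : ∀ u v x y : A, x * v = v * x → (u * x) * (v * y) = (u * v) * (x * y) := by
    intro u v x y h
    rw [mul_assoc, ← mul_assoc x, h, mul_assoc, ← mul_assoc]
  have hcomm_mul : ∀ x u v : A, x * u = u * x → x * v = v * x → x * (u * v) = (u * v) * x := by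
    intro x u v h1 h2'
    rw [← mul_assoc, h1, mul_assoc, h2', ← mul_assoc]
  set a := π - Complex.I • φbar with ha
  set b := πbar + Complex.I • φ with hb
  -- a, b commute with all fermions
  have haψ : ∀ γ, a * ψ γ = ψ γ * a := by
    intro γ; rw [ha]
    simp only [sub_mul, mul_sub, smul_mul_assoc, mul_smul_comm, hπψ γ, hφbψ γ]
  have haψb : ∀ γ, a * ψbar γ = ψbar γ * a := by
    intro γ; rw [ha]
    simp only [sub_mul, mul_sub, smul_mul_assoc, mul_smul_comm, hπψb γ, hφbψb γ]
  have hbψ : ∀ γ, b * ψ γ = ψ γ * b := by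
    intro γ; rw [hb]
    simp only [add_mul, mul_add, smul_mul_assoc, mul_smul_comm, hπbψ γ, hφψ γ]
  have hbψb : ∀ γ, b * ψbar γ = ψbar γ * b := by
    intro γ; rw [hb]
    simp only [add_mul, mul_add, smul_mul_assoc, mul_smul_comm, hπbψb γ, hφψb γ]
  -- bosonic normal ordering rules
  have n1 : π * φ = φ * π - Complex.I • (1:A) := by
    have h := hπφ; rw [sub_eq_iff_eq_add] at h; rw [h]; module
  have n1' : ∀ x : A, π * (φ * x) = φ * (π * x) - Complex.I • x := by
    intro x; rw [← mul_assoc, n1, sub_mul, smul_mul_assoc, one_mul, mul_assoc]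
  have n2 : πbar * φbar = φbar * πbar - Complex.I • (1:A) := by
    have h := hπbφb; rw [sub_eq_iff_eq_add] at h; rw [h]; module
  have n2' : ∀ x : A, πbar * (φbar * x) = φbar * (πbar * x) - Complex.I • x := by
    intro x; rw [← mul_assoc, n2, sub_mul, smul_mul_assoc, one_mul, mul_assoc]
  have n3' : ∀ x : A, π * (φbar * x) = φbar * (π * x) := by
    intro x; rw [← mul_assoc, hπφb, mul_assoc]
  have n4' : ∀ x : A, πbar * (φ * x) = φ * (πbar * x) := by
    intro x; rw [← mul_assoc, hπbφ, mul_assoc]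
  have n5 : πbar * π = π * πbar := hππb.symm
  have n5' : ∀ x : A, πbar * (π * x) = π * (πbar * x) := by
    intro x; rw [← mul_assoc, ← hππb, mul_assoc]
  have n6 : φbar * φ = φ * φbar := hφφb.symm
  have n6' : ∀ x : A, φbar * (φ * x) = φ * (φbar * x) := by
    intro x; rw [← mul_assoc, ← hφφb, mul_assoc]
  -- key bosonic identities
  have hba : b * a = πbar * π + φbar * φ + Complex.I • (φ * π - φbar * πbar) - 1 := by
    rw [ha, hb]
    simp only [add_mul, mul_add, mul_sub, sub_mul, smul_mul_assoc, mul_smul_comm,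
      smul_smul, smul_sub, smul_add, Complex.I_mul_I, neg_smul, one_smul, mul_one,
      one_mul, mul_assoc, n1, n1', n2, n2', hπφb, n3', hπbφ, n4', n5, n5', n6, n6']
    module
  have hab : a * b = πbar * π + φbar * φ + Complex.I • (φ * π - φbar * πbar) + 1 := by
    rw [ha, hb]
    simp only [add_mul, mul_add, mul_sub, sub_mul, smul_mul_assoc, mul_smul_comm,
      smul_smul, smul_sub, smul_add, Complex.I_mul_I, neg_smul, one_smul, mul_one,
      one_mul, mul_assoc, n1, n1', n2, n2', hπφb, n3', hπbφ, n4', n5, n5', n6, n6']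
    module
  have hab2 : a * b = b * a + (2:ℂ) • (1:A) := by rw [hab, hba]; module
  have haB : a * (πbar * π + φbar * φ) = (πbar * π + φbar * φ) * a + a := by
    rw [ha]
    simp only [add_mul, mul_add, mul_sub, sub_mul, smul_mul_assoc, mul_smul_comm,
      smul_smul, smul_sub, smul_add, Complex.I_mul_I, neg_smul, one_smul, mul_one,
      one_mul, mul_assoc, n1, n1', n2, n2', hπφb, n3', hπbφ, n4', n5, n5', n6, n6']
    module
  have haL : a * L = L * a + a := by
    rw [hL, ha]
    simp only [add_mul, mul_add, mul_sub, sub_mul, smul_mul_assoc, mul_smul_comm,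
      smul_smul, smul_sub, smul_add, Complex.I_mul_I, neg_smul, one_smul, mul_one,
      one_mul, mul_assoc, n1, n1', n2, n2', hπφb, n3', hπbφ, n4', n5, n5', n6, n6']
    module
  have hbL : b * L = L * b - b := by
    rw [hL, hb]
    simp only [add_mul, mul_add, mul_sub, sub_mul, smul_mul_assoc, mul_smul_comm,
      smul_smul, smul_sub, smul_add, Complex.I_mul_I, neg_smul, one_smul, mul_one,
      one_mul, mul_assoc, n1, n1', n2, n2', hπφb, n3', hπbφ, n4', n5, n5', n6, n6']
    module
  -- fermionic rules
  have fr1 : ∀ γ δ : Fin 2, ψbar δ * ψ γ = (if γ = δ then (1:A) else 0) - ψ γ * ψbar δ := by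
    intro γ δ
    rw [eq_sub_iff_add_eq, add_comm]; exact hψψb γ δ
  have fr1' : ∀ (γ δ : Fin 2) (x : A),
      ψbar δ * (ψ γ * x) = (if γ = δ then x else 0) - ψ γ * (ψbar δ * x) := by
    intro γ δ x
    rw [← mul_assoc, fr1, sub_mul, ite_mul, one_mul, zero_mul, mul_assoc]
  have fr2 : ∀ γ, ψ γ * ψ γ = 0 := by
    intro γ
    have h2' : (2:ℂ) • (ψ γ * ψ γ) = 0 := by rw [two_smul]; exact hψψ γ γ
    calc ψ γ * ψ γ = (2:ℂ)⁻¹ • ((2:ℂ) • (ψ γ * ψ γ)) := by rw [smul_smul]; norm_num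
    _ = 0 := by rw [h2', smul_zero]
  have fr2' : ∀ (γ : Fin 2) (x : A), ψ γ * (ψ γ * x) = 0 := by
    intro γ x; rw [← mul_assoc, fr2, zero_mul]
  have fr3 : ∀ γ, ψbar γ * ψbar γ = 0 := by
    intro γ
    have h2' : (2:ℂ) • (ψbar γ * ψbar γ) = 0 := by rw [two_smul]; exact hψbψb γ γ
    calc ψbar γ * ψbar γ = (2:ℂ)⁻¹ • ((2:ℂ) • (ψbar γ * ψbar γ)) := by rw [smul_smul]; norm_num
    _ = 0 := by rw [h2', smul_zero]
  have fr3' : ∀ (γ : Fin 2) (x : A), ψbar γ * (ψbar γ * x) = 0 := by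
    intro γ x; rw [← mul_assoc, fr3, zero_mul]
  have fr4 : ψ 1 * ψ 0 = -(ψ 0 * ψ 1) := eq_neg_of_add_eq_zero_left (hψψ 1 0)
  have fr4' : ∀ x : A, ψ 1 * (ψ 0 * x) = -(ψ 0 * (ψ 1 * x)) := by
    intro x; rw [← mul_assoc, fr4, neg_mul, mul_assoc]
  have fr5 : ψbar 1 * ψbar 0 = -(ψbar 0 * ψbar 1) := eq_neg_of_add_eq_zero_left (hψbψb 1 0)
  have fr5' : ∀ x : A, ψbar 1 * (ψbar 0 * x) = -(ψbar 0 * (ψbar 1 * x)) := by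
    intro x; rw [← mul_assoc, fr5, neg_mul, mul_assoc]
  -- Z values
  have hZ00 : Zch ψ ψbar 0 0 = ψ 0 * ψbar 0 - ψ 1 * ψbar 1 := by
    simp [Zch, psiUp, psibarDown, εup, εdown, Fin.sum_univ_two]; module
  have hZ11 : Zch ψ ψbar 1 1 = ψ 1 * ψbar 1 - ψ 0 * ψbar 0 := by
    simp [Zch, psiUp, psibarDown, εup, εdown, Fin.sum_univ_two]; module
  have hZ01 : Zch ψ ψbar 0 1 = (2:ℂ) • (ψ 0 * ψbar 1) := by
    simp [Zch, psiUp, psibarDown, εup, εdown, Fin.sum_univ_two]; module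
  have hZ10 : Zch ψ ψbar 1 0 = (2:ℂ) • (ψ 1 * ψbar 0) := by
    simp [Zch, psiUp, psibarDown, εup, εdown, Fin.sum_univ_two]; module
  -- commutation of fermions with bosonic composites
  have hψB : ∀ γ, ψ γ * (πbar * π + φbar * φ) = (πbar * π + φbar * φ) * ψ γ := by
    intro γ
    rw [mul_add, add_mul,
      hcomm_mul (ψ γ) πbar π (hπbψ γ).symm (hπψ γ).symm,
      hcomm_mul (ψ γ) φbar φ (hφbψ γ).symm (hφψ γ).symm]
  have hψL : ∀ γ, ψ γ * L = L * ψ γ := by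
    intro γ
    rw [hL]
    rw [mul_smul_comm, smul_mul_assoc, mul_sub, sub_mul,
      hcomm_mul (ψ γ) φ π (hφψ γ).symm (hπψ γ).symm,
      hcomm_mul (ψ γ) φbar πbar (hφbψ γ).symm (hπbψ γ).symm]
  have hψbL : ∀ γ, ψbar γ * L = L * ψbar γ := by
    intro γ
    rw [hL]
    rw [mul_smul_comm, smul_mul_assoc, mul_sub, sub_mul,
      hcomm_mul (ψbar γ) φ π (hφψb γ).symm (hπψb γ).symm,
      hcomm_mul (ψbar γ) φbar πbar (hφbψb γ).symm (hπbψb γ).symm]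
  -- a commutes with the fermionic sum, ψ γ almost does
  have haS : a * (∑ γ, (ψ γ * ψbar γ - ψbar γ * ψ γ)) =
      (∑ γ, (ψ γ * ψbar γ - ψbar γ * ψ γ)) * a := by
    rw [Fin.sum_univ_two]
    simp only [mul_add, add_mul, mul_sub, sub_mul,
      hcomm_mul a (ψ 0) (ψbar 0) (haψ 0) (haψb 0),
      hcomm_mul a (ψbar 0) (ψ 0) (haψb 0) (haψ 0),
      hcomm_mul a (ψ 1) (ψbar 1) (haψ 1) (haψb 1),
      hcomm_mul a (ψbar 1) (ψ 1) (haψb 1) (haψ 1)]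
  have hψS : ∀ γ, ψ γ * (∑ δ, (ψ δ * ψbar δ - ψbar δ * ψ δ)) =
      (∑ δ, (ψ δ * ψbar δ - ψbar δ * ψ δ)) * ψ γ - (2:ℂ) • ψ γ := by
    intro γ
    rw [Fin.sum_univ_two]
    fin_cases γ <;>
      · simp only [Fin.isValue, Fin.zero_eta, Fin.mk_one, mul_add, add_mul, mul_sub, sub_mul, mul_assoc,
          fr1, fr1', fr2, fr2', fr3, fr3', fr4, fr4', fr5, fr5',
          reduceIte, Fin.reduceEq, mul_one, one_mul, mul_zero, zero_mul, mul_neg, neg_mul,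
          sub_zero, zero_sub, if_true, if_false]
        module
  -- Part 3 key
  have key3 : ∀ γ, (ψ γ * a) * H = H * (ψ γ * a) := by
    intro γ
    rw [hH]
    have e1 : ψ γ * a * (πbar * π + φbar * φ)
        = (πbar * π + φbar * φ) * (ψ γ * a) + ψ γ * a := by
      rw [mul_assoc, haB, mul_add, ← mul_assoc, hψB γ, mul_assoc]
    have e2 : ψ γ * a * (∑ δ, (ψ δ * ψbar δ - ψbar δ * ψ δ))
        = (∑ δ, (ψ δ * ψbar δ - ψbar δ * ψ δ)) * (ψ γ * a) - (2:ℂ) • (ψ γ * a) := by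
      rw [mul_assoc, haS, ← mul_assoc, hψS γ, sub_mul, smul_mul_assoc, mul_assoc]
    rw [mul_add, add_mul, e1, mul_smul_comm, e2, smul_mul_assoc]
    module
  intro α β
  refine ⟨?_, ?_, ?_, ?_, ?_⟩
  · -- (1) QQ anticommutator
    simp only [hQ, smul_mul_assoc, mul_smul_comm, smul_smul, h2]
    rw [rearr (ψ α) (ψ β) a a (haψ β), rearr (ψ β) (ψ α) a a (haψ α),
      ← smul_add, ← add_mul, hψψ α β, zero_mul, smul_zero]
  · -- (2) Q Qbar anticommutator
    simp only [hQ, hQbar, smul_mul_assoc, mul_smul_comm, smul_smul, h2]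
    rw [rearr (ψ α) (ψbar β) a b (haψb β), rearr (ψbar β) (ψ α) b a (hbψ α),
      hab2, fr1 α β]
    have hHL : H + L = b * a + 1 + (2:ℂ)⁻¹ • (∑ γ, (ψ γ * ψbar γ - ψbar γ * ψ γ)) := by
      rw [hH, hL, hba]; module
    by_cases hc : α = β
    · subst hc
      rw [if_pos rfl, if_pos rfl, hHL]
      fin_cases α <;>
        · simp only [Fin.isValue, Fin.zero_eta, Fin.mk_one, hZ00, hZ11,
            Fin.sum_univ_two, fr1, reduceIte, Fin.reduceEq, mul_smul_comm,
            mul_add, add_mul, mul_sub, sub_mul, mul_one, one_mul]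
          module
    · rw [if_neg hc, if_neg hc]
      fin_cases α <;> fin_cases β <;>
        first
        | exact absurd rfl hc
        | · simp only [Fin.isValue, Fin.zero_eta, Fin.mk_one, hZ01, hZ10,
              mul_smul_comm, mul_add, add_mul, sub_mul, mul_one,
              one_mul, zero_sub, neg_mul, zero_mul, zero_add]
            module
  · -- (3) Q commutes with H
    rw [hQ α, smul_mul_assoc, mul_smul_comm, key3 α]
  · -- (4) [Q, L] = Q
    rw [hQ α, smul_mul_assoc, mul_smul_comm, ← smul_sub]
    have key : ψ α * a * L - L * (ψ α * a) = ψ α * a := by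
      rw [mul_assoc, haL, mul_add, ← mul_assoc, hψL α, mul_assoc]
      abel
    rw [key]
  · -- (5) [Qbar, L] = -Qbar
    rw [hQbar α, smul_mul_assoc, mul_smul_comm, ← smul_sub]
    have key : ψbar α * b * L - L * (ψbar α * b) = -(ψbar α * b) := by
      rw [mul_assoc, hbL, mul_sub, ← mul_assoc, hψbL α, mul_assoc]
      abel
    rw [key, smul_neg]
end
end
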